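/- Assume in addition each H_i(x,·) is strictly convex. If x₀ ∈ 𝕋^N is an equilibrium point of the critical weakly coupled system, then every critical subsolution u is strictly differentiable at x₀ in each component; i.e., the Clarke gradient ∂u_i(x₀) is a singleton for every i. -/

import Mathlib

open Set MeasureTheory Filter Topology

noncomputable section

/-- Euclidean space ℝ^N. -/
abbrev E (N : ℕ) := EuclideanSpace ℝ (Fin N)
/-- The dual of ℝ^N, representing momentum variables p (acting by p · q). -/
abbrev Dual (N : ℕ) := E N →L[ℝ] ℝ

variable {N : ℕ}

/-- ℤ^N-periodicity: a function on ℝ^N descends to the flat torus 𝕋^N. -/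
def ZPer {α : Type*} (f : E N → α) : Prop :=
  ∀ (x : E N) (k : Fin N → ℤ), f (x + (EuclideanSpace.equiv (Fin N) ℝ).symm fun i => (k i : ℝ)) = f x

/-- The Clarke generalized gradient of f at x. -/
def clarke (f : E N → ℝ) (x : E N) : Set (Dual N) :=
  convexHull ℝ {p | ∃ u : ℕ → E N, (∀ n, DifferentiableAt ℝ f (u n)) ∧
    Tendsto u atTop (𝓝 x) ∧ Tendsto (fun n => fderiv ℝ f (u n)) atTop (𝓝 p)}

/-- The viscosity superdifferential D⁺f(x): differentials of C¹ functions supertangent to f at x. -/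
def Dplus (f : E N → ℝ) (x : E N) : Set (Dual N) :=
  {p | ∃ φ : E N → ℝ, ContDiff ℝ 1 φ ∧ φ x = f x ∧ (∀ᶠ y in 𝓝 x, f y ≤ φ y) ∧ fderiv ℝ φ x = p}

/-- The viscosity subdifferential D⁻f(x): differentials of C¹ functions subtangent to f at x. -/
def Dminus (f : E N → ℝ) (x : E N) : Set (Dual N) :=
  {p | ∃ φ : E N → ℝ, ContDiff ℝ 1 φ ∧ φ x = f x ∧ (∀ᶠ y in 𝓝 x, φ y ≤ f y) ∧ fderiv ℝ φ x = p}
variable {m : ℕ}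

/-- A (critical at α = β) subsolution of the weakly coupled system: each component is
Lipschitz, periodic, and H_i(x,p) + ∑_j a_{ij} u_j(x) ≤ α for every Clarke gradient
p ∈ ∂u_i(x) (equivalent to the viscosity notion by convexity). -/
def IsSubsol (H : Fin m → E N → Dual N → ℝ) (A : Matrix (Fin m) (Fin m) ℝ) (α : ℝ)
    (u : Fin m → E N → ℝ) : Prop :=
  (∀ i, ∃ K : NNReal, LipschitzWith K (u i)) ∧ (∀ i, ZPer (u i)) ∧
  ∀ i x, ∀ p ∈ clarke (u i) x, H i x p + ∑ j, A i j * u j x ≤ α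

/-!
Every `q ∈ ∂u_j(x₀)` satisfies `min H_j(x₀, ·) ≤ H_j(x₀, q) ≤ β - (A u(x₀))_j`. Since `o ᵥ* A = 0`,
the `o`-average of the right-hand sides is `β`, which at an equilibrium point is also the
`o`-average of the left-hand sides; as `o > 0` (irreducibility), all these inequalities are
equalities. So every element of the (nonempty) set `∂u_i(x₀)` minimizes `H_i(x₀, ·)`, which has at
most one minimizer by strict convexity.
-/

-- By Rademacher, differentiability points are dense; their gradients are bounded by the
-- Lipschitz constant, so some subsequence of them converges.
lemma clarke_nonempty_of_lipschitzWith {f : E N → ℝ} {K : NNReal} (hf : LipschitzWith K f)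
    (x : E N) : (clarke f x).Nonempty := by
  have hdense : Dense {y | DifferentiableAt ℝ f y} :=
    Measure.dense_of_ae (μ := volume) hf.ae_differentiableAt
  obtain ⟨v, hv, hvx⟩ := mem_closure_iff_seq_limit.1 (hdense x)
  have hbound : ∀ n, fderiv ℝ f (v n) ∈ Metric.closedBall (0 : Dual N) K := fun n => by
    simpa using norm_fderiv_le_of_lipschitz ℝ hf
  obtain ⟨p, -, φ, hφ, hp⟩ := (isCompact_closedBall (0 : Dual N) K).tendsto_subseq hbound
  exact ⟨p, subset_convexHull ℝ _ ⟨v ∘ φ, fun n => hv _, hvx.comp hφ.tendsto_atTop, hp⟩⟩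

lemma Continuous.bddBelow_range_of_le_norm {F : Type*} [NormedAddCommGroup F] [ProperSpace F]
    [Nonempty F] {g : F → ℝ} (hg : Continuous g) {R : ℝ} (hR : ∀ p, R ≤ ‖p‖ → ‖p‖ ≤ g p) :
    BddBelow (range g) := by
  have hcoercive : Tendsto g (cocompact F) atTop :=
    tendsto_atTop_mono' _ (tendsto_norm_cocompact_atTop.eventually (eventually_ge_atTop R)
      |>.mono hR) tendsto_norm_cocompact_atTop
  obtain ⟨p₀, hp₀⟩ := hg.exists_forall_le hcoercive
  exact ⟨g p₀, forall_mem_range.2 hp₀⟩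

-- The zero pattern of a nonnegative left null vector is invariant under an irreducible
-- Z-matrix: a zero entry `o b` forces `o a = 0` whenever `A a b < 0`.
lemma Matrix.pos_of_vecMul_eq_zero_of_irreducible {ι : Type*} [Fintype ι]
    {A : Matrix ι ι ℝ} (hoff : ∀ i j, i ≠ j → A i j ≤ 0)
    (hirr : ∀ W : Finset ι, W.Nonempty → W ≠ Finset.univ → ∃ i ∈ W, ∃ j ∉ W, A i j < 0)
    {o : ι → ℝ} (ho : Matrix.vecMul o A = 0) (hnonneg : ∀ i, 0 ≤ o i) (hne : o ≠ 0) (i : ι) :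
    0 < o i := by
  by_contra hi
  set W := Finset.univ.filter fun j => 0 < o j
  have hW : W.Nonempty := by
    obtain ⟨j, hj⟩ := Function.ne_iff.1 hne
    exact ⟨j, Finset.mem_filter.2 ⟨Finset.mem_univ j, (hnonneg j).lt_of_ne' hj⟩⟩
  have hWuniv : W ≠ Finset.univ := fun h => by
    have hiW : i ∈ W := h ▸ Finset.mem_univ i
    exact hi (Finset.mem_filter.1 hiW).2
  obtain ⟨a, ha, b, hb, hab⟩ := hirr W hW hWuniv
  have hob : o b = 0 := le_antisymm (not_lt.1 fun h => hb (by simp [W, h])) (hnonneg b)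
  have hterms : ∀ k ∈ Finset.univ, o k * A k b ≤ 0 := fun k _ => by
    rcases eq_or_ne k b with rfl | hkb
    · simp [hob]
    · exact mul_nonpos_of_nonneg_of_nonpos (hnonneg k) (hoff k b hkb)
  have hcol : ∑ k, o k * A k b = 0 := congrFun ho b
  have hzero := (Finset.sum_eq_zero_iff_of_nonpos hterms).1 hcol a (Finset.mem_univ a)
  exact (mul_neg_of_pos_of_neg (Finset.mem_filter.1 ha).2 hab).ne hzero

lemma eq_of_le_of_sum_mul_eq {ι : Type*} [Fintype ι] {o a b : ι → ℝ} (ho : ∀ i, 0 < o i)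
    (hab : ∀ i, a i ≤ b i) (h : ∑ i, o i * a i = ∑ i, o i * b i) (i : ι) : a i = b i := by
  have hmul := (Finset.sum_eq_sum_iff_of_le fun j _ =>
    mul_le_mul_of_nonneg_left (hab j) (ho j).le).1 h i (Finset.mem_univ i)
  exact mul_left_cancel₀ (ho i).ne' hmul

lemma sum_mul_sub_mulVec_of_vecMul_eq_zero {ι : Type*} [Fintype ι]
    {A : Matrix ι ι ℝ} {o : ι → ℝ} (ho : Matrix.vecMul o A = 0) (ho1 : ∑ i, o i = 1)
    (β : ℝ) (v : ι → ℝ) : ∑ i, o i * (β - A.mulVec v i) = β := by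
  have hdot : o ⬝ᵥ A.mulVec v = 0 := by rw [Matrix.dotProduct_mulVec, ho, zero_dotProduct]
  simp only [mul_sub, Finset.sum_sub_distrib, ← Finset.sum_mul, ho1, one_mul]
  simpa [dotProduct] using hdot

theorem strict_differentiability_at_equilibrium_general
    (H : Fin m → E N → Dual N → ℝ)
    (hsl : ∀ i x (C : ℝ), ∃ R : ℝ, ∀ p : Dual N, R ≤ ‖p‖ → C * ‖p‖ ≤ H i x p)
    (A : Matrix (Fin m) (Fin m) ℝ)
    (hoff : ∀ i j, i ≠ j → A i j ≤ 0)
    (hirr : ∀ W : Finset (Fin m), W.Nonempty → W ≠ Finset.univ →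
      ∃ i ∈ W, ∃ j ∉ W, A i j < 0)
    (β : ℝ)
    (o : Fin m → ℝ) (ho : Matrix.vecMul o A = 0) (ho1 : ∑ i, o i = 1)
    (honn : ∀ i, 0 ≤ o i)
    (u : Fin m → E N → ℝ) (hu : IsSubsol H A β u)
    (hstrict : ∀ i x, StrictConvexOn ℝ Set.univ (fun p : Dual N => H i x p))
    (x₀ : E N)
    (hx₀ : ∑ i, o i * sInf (Set.range fun p : Dual N => H i x₀ p) = β) :
    ∀ i, ∃ p : Dual N, clarke (u i) x₀ = {p} := by
  have hopos : ∀ j, 0 < o j :=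
    Matrix.pos_of_vecMul_eq_zero_of_irreducible hoff hirr ho honn fun h => by simp [h] at ho1
  have hbdd : ∀ j, BddBelow (range (H j x₀)) := fun j => by
    obtain ⟨R, hR⟩ := hsl j x₀ 1
    exact (continuousOn_univ.1 ((hstrict j x₀).convexOn.continuousOn isOpen_univ))
      |>.bddBelow_range_of_le_norm fun p hp => by simpa using hR p hp
  have hne : ∀ j, (clarke (u j) x₀).Nonempty := fun j =>
    (hu.1 j).elim fun _ hK => clarke_nonempty_of_lipschitzWith hK x₀
  have hsub : ∀ j, ∀ q ∈ clarke (u j) x₀, H j x₀ q ≤ β - A.mulVec (fun k => u k x₀) j :=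
    fun j q hq => le_sub_iff_add_le.2 (hu.2.2 j x₀ q hq)
  have hmin_eq : ∀ j, sInf (range (H j x₀)) = β - A.mulVec (fun k => u k x₀) j := by
    refine eq_of_le_of_sum_mul_eq hopos (fun j => ?_) ?_
    · obtain ⟨q, hq⟩ := hne j
      exact (csInf_le (hbdd j) ⟨q, rfl⟩).trans (hsub j q hq)
    · rw [hx₀, sum_mul_sub_mulVec_of_vecMul_eq_zero ho ho1]
  intro i
  have hmin : ∀ q ∈ clarke (u i) x₀, IsMinOn (H i x₀) univ q := fun q hq p _ =>
    (hsub i q hq).trans ((hmin_eq i).ge.trans (csInf_le (hbdd i) ⟨p, rfl⟩))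
  exact exists_eq_singleton_iff_nonempty_subsingleton.2 ⟨hne i,
    fun q hq q' hq' => (hstrict i x₀).eq_of_isMinOn (hmin q hq) (hmin q' hq') trivial trivial⟩

/-- if each H_i(x,·) is strictly convex, then every critical subsolution is
strictly differentiable at any equilibrium point x₀: each Clarke gradient ∂u_i(x₀) is a
singleton. -/
theorem strict_differentiability_at_equilibrium
    (H : Fin m → E N → Dual N → ℝ)
    (hHc : ∀ i, Continuous fun q : E N × Dual N => H i q.1 q.2)
    (hHper : ∀ i p, ZPer fun x => H i x p)
    (hconv : ∀ i x, ConvexOn ℝ Set.univ (fun p : Dual N => H i x p))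
    (hsl : ∀ i x (C : ℝ), ∃ R : ℝ, ∀ p : Dual N, R ≤ ‖p‖ → C * ‖p‖ ≤ H i x p)
    (A : Matrix (Fin m) (Fin m) ℝ)
    (hoff : ∀ i j, i ≠ j → A i j ≤ 0)
    (hrow : ∀ i, ∑ j, A i j = 0)
    (hirr : ∀ W : Finset (Fin m), W.Nonempty → W ≠ Finset.univ →
      ∃ i ∈ W, ∃ j ∉ W, A i j < 0)
    (β : ℝ) (hβ : β = sInf {α | ∃ u, IsSubsol H A α u})
    (o : Fin m → ℝ) (ho : Matrix.vecMul o A = 0) (ho1 : ∑ i, o i = 1)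
    (honn : ∀ i, 0 ≤ o i)
    (u : Fin m → E N → ℝ) (hu : IsSubsol H A β u)
    (hstrict : ∀ i x, StrictConvexOn ℝ Set.univ (fun p : Dual N => H i x p))
    (x₀ : E N)
    (hx₀ : ∑ i, o i * sInf (Set.range fun p : Dual N => H i x₀ p) = β) :
    ∀ i, ∃ p : Dual N, clarke (u i) x₀ = {p} :=
  strict_differentiability_at_equilibrium_general H hsl A hoff hirr β o ho ho1 honn u hu hstrict x₀
    hx₀
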